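/- arXiv:2604.09093 — 7 statements merged into one kernel-verified Lean document; each statement's English description precedes it below -/
import Mathlib

section
/- Let G be a locally compact second countable group with left Haar measure m_G, and let f : G → [0,∞) be a measurable function satisfying f(gh) ≤ f(g)·f(h) for all g,h ∈ G. Then f is bounded on every compact subset of G. -/
/-!
The sets `E n = {g | f g ≤ n ∧ f g⁻¹ ≤ n}` cover `G`, so one of them has positive Haar measure.
By Steinhaus' theorem `E n / E n` is a neighbourhood of `1`, and submultiplicativity bounds `f`
by `n²` there. Translating, `f ≤ f x * n²` on the neighbourhood `x • (E n / E n)` of any `x`,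
and compactness turns these local bounds into a bound on `K`.
-/

open MeasureTheory Topology Pointwise Set

theorem IsCompact.bddAbove_image_of_forall_nhds {X α : Type*} [TopologicalSpace X] [Preorder α]
    [IsDirected α (· ≤ ·)] [Nonempty α] {f : X → α} {K : Set X} (hK : IsCompact K)
    (hf : ∀ x ∈ K, ∃ U ∈ 𝓝 x, BddAbove (f '' U)) : BddAbove (f '' K) := by
  choose U hU hbdd using hf
  obtain ⟨I, hKI⟩ := hK.elim_nhds_subcover' U hU
  have hI : BddAbove (⋃ x ∈ I, f '' U x x.2) :=
    I.finite_toSet.bddAbove_biUnion.2 fun x _ => hbdd x x.2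
  refine hI.mono ?_
  rw [← image_iUnion₂]
  exact image_mono hKI

theorem exists_nat_measure_setOf_le_pos {α : Type*} [MeasurableSpace α] (μ : Measure α)
    [NeZero μ] (φ : α → ℝ) : ∃ n : ℕ, 0 < μ {x | φ x ≤ n} := by
  refine exists_measure_pos_of_not_measure_iUnion_null ?_
  have hcover : ⋃ n : ℕ, {x | φ x ≤ n} = univ :=
    iUnion_eq_univ_iff.2 fun x => exists_nat_ge (φ x)
  rw [hcover]
  exact NeZero.ne _

section Submultiplicative

variable {G : Type*} [Group G] {f : G → ℝ}

theorem le_mul_of_mem_div (hf_nonneg : ∀ g, 0 ≤ f g)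
    (hf_submul : ∀ g h : G, f (g * h) ≤ f g * f h) {A B : Set G} {a b : ℝ}
    (hA : ∀ x ∈ A, f x ≤ a) (hB : ∀ y ∈ B, f y⁻¹ ≤ b) : ∀ z ∈ A / B, f z ≤ a * b := by
  rintro _ ⟨x, hx, y, hy, rfl⟩
  calc f (x / y) = f (x * y⁻¹) := by rw [div_eq_mul_inv]
    _ ≤ f x * f y⁻¹ := hf_submul x y⁻¹
    _ ≤ a * b := mul_le_mul (hA x hx) (hB y hy) (hf_nonneg _) ((hf_nonneg x).trans (hA x hx))

theorem bddAbove_image_smul_of_bddAbove_image (hf_nonneg : ∀ g, 0 ≤ f g)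
    (hf_submul : ∀ g h : G, f (g * h) ≤ f g * f h) {V : Set G} (hV : BddAbove (f '' V)) (x : G) :
    BddAbove (f '' (x • V)) := by
  obtain ⟨C, hC⟩ := hV
  refine ⟨f x * C, ?_⟩
  rintro _ ⟨_, ⟨y, hy, rfl⟩, rfl⟩
  calc f (x • y) ≤ f x * f y := hf_submul x y
    _ ≤ f x * C := mul_le_mul_of_nonneg_left (hC (mem_image_of_mem f hy)) (hf_nonneg x)

variable [TopologicalSpace G] [IsTopologicalGroup G]

theorem IsCompact.bddAbove_image_of_submul_of_nhds_one (hf_nonneg : ∀ g, 0 ≤ f g)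
    (hf_submul : ∀ g h : G, f (g * h) ≤ f g * f h) {V : Set G} (hV : V ∈ 𝓝 1)
    (hbdd : BddAbove (f '' V)) {K : Set G} (hK : IsCompact K) : BddAbove (f '' K) :=
  hK.bddAbove_image_of_forall_nhds fun x _ =>
    ⟨x • V, by simpa using smul_mem_nhds_smul x hV,
      bddAbove_image_smul_of_bddAbove_image hf_nonneg hf_submul hbdd x⟩

variable [MeasurableSpace G] [BorelSpace G] [LocallyCompactSpace G]

theorem exists_nhds_one_bddAbove_image_of_submul (μ : Measure G) [μ.IsHaarMeasure]
    [μ.InnerRegular] (hf_meas : Measurable f) (hf_nonneg : ∀ g, 0 ≤ f g)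
    (hf_submul : ∀ g h : G, f (g * h) ≤ f g * f h) : ∃ V ∈ 𝓝 (1 : G), BddAbove (f '' V) := by
  set φ : G → ℝ := fun g => max (f g) (f g⁻¹)
  obtain ⟨n, hn⟩ := exists_nat_measure_setOf_le_pos μ φ
  set E := {g | φ g ≤ n}
  have hE : MeasurableSet E :=
    measurableSet_le (hf_meas.max (hf_meas.comp measurable_inv)) measurable_const
  refine ⟨E / E, μ.div_mem_nhds_one_of_haar_pos E hE hn, (n : ℝ) * n, ?_⟩
  rintro _ ⟨z, hz, rfl⟩
  exact le_mul_of_mem_div hf_nonneg hf_submul (fun x hx => (max_le_iff.1 hx).1)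
    (fun y hy => (max_le_iff.1 hy).2) z hz

end Submultiplicative

/-- A measurable submultiplicative nonnegative function on a locally compact second
countable group is bounded on every compact set. -/
theorem stmt_0 {G : Type*} [Group G] [TopologicalSpace G] [IsTopologicalGroup G]
    [LocallyCompactSpace G] [SecondCountableTopology G]
    [MeasurableSpace G] [BorelSpace G]
    (mG : Measure G) [mG.IsHaarMeasure]
    (f : G → ℝ) (hf_meas : Measurable f) (hf_nonneg : ∀ g, 0 ≤ f g)
    (hf_submul : ∀ g h : G, f (g * h) ≤ f g * f h)
    (K : Set G) (hK : IsCompact K) :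
    ∃ M : ℝ, ∀ g ∈ K, f g ≤ M := by
  obtain ⟨V, hV, hbdd⟩ :=
    exists_nhds_one_bddAbove_image_of_submul mG hf_meas hf_nonneg hf_submul
  obtain ⟨M, hM⟩ := hK.bddAbove_image_of_submul_of_nhds_one hf_nonneg hf_submul hV hbdd
  exact ⟨M, fun g hg => hM (mem_image_of_mem f hg)⟩
end

section
/- Let f : G → [0,∞) be a symmetric (f(g) = f(g⁻¹)) submultiplicative measurable function on a locally compact second countable group G. If E is a measurable subset of positive Haar measure on which f ≤ c, then f ≤ c² on the set E·E⁻¹, and E·E⁻¹ contains an open neighborhood of the identity; hence f is bounded on a neighborhood of the identity. -/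
open MeasureTheory
open scoped Pointwise

theorem le_sq_of_mem_mul_inv {G : Type*} [Mul G] [Inv G] {f : G → ℝ}
    (hf_nonneg : ∀ g, 0 ≤ f g) (hf_symm : ∀ g : G, f g⁻¹ = f g)
    (hf_submul : ∀ g h : G, f (g * h) ≤ f g * f h) {c : ℝ} {E : Set G}
    (hfE : ∀ g ∈ E, f g ≤ c) : ∀ g ∈ E * E⁻¹, f g ≤ c ^ 2 := by
  rintro _ ⟨a, ha, b, hb, rfl⟩
  calc f (a * b) ≤ f a * f b⁻¹ := hf_symm b ▸ hf_submul a b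
    _ ≤ c * c := mul_le_mul (hfE a ha) (hfE b⁻¹ hb) (hf_nonneg _)
        ((hf_nonneg a).trans (hfE a ha))
    _ = c ^ 2 := (sq c).symm

theorem stmt_1_general {G : Type*} [Group G] [TopologicalSpace G] [IsTopologicalGroup G]
    [LocallyCompactSpace G] [SecondCountableTopology G]
    [MeasurableSpace G] [BorelSpace G]
    (mG : Measure G) [mG.IsHaarMeasure]
    (f : G → ℝ) (hf_nonneg : ∀ g, 0 ≤ f g)
    (hf_symm : ∀ g : G, f g⁻¹ = f g)
    (hf_submul : ∀ g h : G, f (g * h) ≤ f g * f h)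
    (c : ℝ) (E : Set G) (hE : MeasurableSet E) (hEpos : 0 < mG E)
    (hfE : ∀ g ∈ E, f g ≤ c) :
    (∀ g ∈ E * E⁻¹, f g ≤ c ^ 2) ∧ E * E⁻¹ ∈ nhds (1 : G) ∧
      ∃ V ∈ nhds (1 : G), ∀ g ∈ V, f g ≤ c ^ 2 := by
  have hbound := le_sq_of_mem_mul_inv hf_nonneg hf_symm hf_submul hfE
  have hnhds : E * E⁻¹ ∈ nhds (1 : G) :=
    div_eq_mul_inv E E ▸ Measure.div_mem_nhds_one_of_haar_pos mG E hE hEpos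
  exact ⟨hbound, hnhds, _, hnhds, hbound⟩

/-- For a symmetric submultiplicative measurable nonnegative function `f` and a measurable
set `E` of positive Haar measure with `f ≤ c` on `E`: `f ≤ c²` on `E·E⁻¹`, the set `E·E⁻¹`
is a neighborhood of the identity, and hence `f` is bounded on a neighborhood of `1`. -/
theorem stmt_1 {G : Type*} [Group G] [TopologicalSpace G] [IsTopologicalGroup G]
    [LocallyCompactSpace G] [SecondCountableTopology G]
    [MeasurableSpace G] [BorelSpace G]
    (mG : Measure G) [mG.IsHaarMeasure]
    (f : G → ℝ) (hf_meas : Measurable f) (hf_nonneg : ∀ g, 0 ≤ f g)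
    (hf_symm : ∀ g : G, f g⁻¹ = f g)
    (hf_submul : ∀ g h : G, f (g * h) ≤ f g * f h)
    (c : ℝ) (E : Set G) (hE : MeasurableSet E) (hEpos : 0 < mG E)
    (hfE : ∀ g ∈ E, f g ≤ c) :
    (∀ g ∈ E * E⁻¹, f g ≤ c ^ 2) ∧ E * E⁻¹ ∈ nhds (1 : G) ∧
      ∃ V ∈ nhds (1 : G), ∀ g ∈ V, f g ≤ c ^ 2 :=
  stmt_1_general mG f hf_nonneg hf_symm hf_submul c E hE hEpos hfE
end

section
/- Let (G,θ) be a measured group and g ∈ G a θ-suitable element, i.e. there exist R ≥ 1, integers k, k_1,…,k_R ≥ 0 and constants α_1,…,α_R > 0 such that gθ^{∗k} ≤ Σ_{r=1}^R α_r · θ^{∗k_r} as measures (with θ^{∗0} = δ_e). Then for every positive θ-harmonic function u with u(e)=1 one has u(g) ≤ Σ_{r=1}^R α_r; hence 𝔪_θ(g) ≤ Σ_r α_r < ∞. -/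
open MeasureTheory ENNReal

/-- `u` is `θ`-harmonic: `u ∗ θ = u`, i.e. `∫ u(g h) dθ(h) = u(g)` for all `g`. -/
def IsHarmonic {G : Type*} [Group G] [MeasurableSpace G] (θ : Measure G) (u : G → ℝ) : Prop :=
  ∀ g : G, ∫ h, u (g * h) ∂θ = u g

/-- The normalized cone `ℍ(G,θ)` of positive measurable `θ`-harmonic functions `u` with
`u(e) = 1`. -/
def harmCone {G : Type*} [Group G] [MeasurableSpace G] (θ : Measure G) : Set (G → ℝ) :=
  {u | Measurable u ∧ (∀ g, 0 < u g) ∧ IsHarmonic θ u ∧ u 1 = 1}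

/-- The harmonic majorant `𝔪_θ(g) = sup{u(g) : u ∈ ℍ(G,θ)}`, with values in `[1,∞]`. -/
noncomputable def majorant {G : Type*} [Group G] [MeasurableSpace G] (θ : Measure G)
    (g : G) : ℝ≥0∞ :=
  ⨆ u ∈ harmCone θ, ENNReal.ofReal (u g)

/-- `θ` is admissible with respect to the Haar measure `mG`: it is absolutely continuous
with respect to the Haar measure class, and it is not supported on a proper closed
subsemigroup of `G`. -/
def IsAdmissible {G : Type*} [Group G] [TopologicalSpace G] [MeasurableSpace G]
    (mG θ : Measure G) : Prop :=
  θ ≪ mG ∧ ∀ S : Set G, IsClosed S → (∀ a ∈ S, ∀ b ∈ S, a * b ∈ S) → θ Sᶜ = 0 →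
    S = Set.univ


/-- The `n`-fold convolution power `θ^{∗n}`, with `θ^{∗0} = δ_e`. -/
noncomputable def convPow {G : Type*} [Monoid G] [MeasurableSpace G] (θ : Measure G) :
    ℕ → Measure G
  | 0 => Measure.dirac 1
  | n + 1 => ((convPow θ n).prod θ).map fun p => p.1 * p.2

/-!
A positive harmonic function integrates against every convolution power `θ^{∗n}` after left
translation by `a` to its value at `a` (harmonicity iterated along `θ^{∗(n+1)} = θ^{∗n} ∗ θ`).
Integrating `u` against both sides of `gθ^{∗k} ≤ Σ_r α_r θ^{∗k_r}` therefore gives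
`u(g) ≤ Σ_r α_r u(e) = Σ_r α_r`.
-/

section Harmonic

variable {G : Type*} [Group G] [MeasurableSpace G] {θ : Measure G} {u : G → ℝ}

theorem IsHarmonic.lintegral_ofReal_mul_left (hharm : IsHarmonic θ u) (hpos : ∀ g, 0 < u g)
    (a : G) : ∫⁻ h, ENNReal.ofReal (u (a * h)) ∂θ = ENNReal.ofReal (u a) := by
  -- a non-integrable function has Bochner integral `0`, but `u a > 0`
  have hint : Integrable (fun h => u (a * h)) θ := by
    by_contra h
    exact (hpos a).ne' (hharm a ▸ integral_undef h)
  rw [← ofReal_integral_eq_lintegral_ofReal hint (.of_forall fun h => (hpos _).le), hharm a]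

theorem IsHarmonic.lintegral_ofReal_mul_left_convPow [MeasurableMul₂ G] [SFinite θ]
    (hharm : IsHarmonic θ u) (hpos : ∀ g, 0 < u g) (hmeas : Measurable u) (n : ℕ) (a : G) :
    ∫⁻ h, ENNReal.ofReal (u (a * h)) ∂(convPow θ n) = ENNReal.ofReal (u a) := by
  have hf (a : G) : Measurable fun h => ENNReal.ofReal (u (a * h)) :=
    (ENNReal.measurable_ofReal.comp hmeas).comp (measurable_const_mul a)
  have hmul : Measurable fun p : G × G => p.1 * p.2 := measurable_mul
  induction n generalizing a with
  | zero => rw [convPow, lintegral_dirac' 1 (hf a), mul_one]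
  | succ n ih =>
    calc ∫⁻ h, ENNReal.ofReal (u (a * h)) ∂(convPow θ (n + 1))
        = ∫⁻ x, ∫⁻ y, ENNReal.ofReal (u (a * x * y)) ∂θ ∂(convPow θ n) := by
          rw [convPow, lintegral_map (hf a) hmul,
            lintegral_prod (fun p => ENNReal.ofReal (u (a * (p.1 * p.2))))
              ((hf a).comp hmul).aemeasurable]
          simp only [mul_assoc]
      _ = ∫⁻ x, ENNReal.ofReal (u (a * x)) ∂(convPow θ n) :=
          lintegral_congr fun x => hharm.lintegral_ofReal_mul_left hpos (a * x)
      _ = ENNReal.ofReal (u a) := ih a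

theorem ofReal_le_sum_of_map_convPow_le [MeasurableMul₂ G] [SFinite θ] (hu : u ∈ harmCone θ)
    {g : G} {k : ℕ} {ι : Type*} {s : Finset ι} {c : ι → ℝ≥0∞} {ks : ι → ℕ}
    (hsuit : (convPow θ k).map (fun x => g * x) ≤ ∑ r ∈ s, c r • convPow θ (ks r)) :
    ENNReal.ofReal (u g) ≤ ∑ r ∈ s, c r := by
  obtain ⟨hmeas, hpos, hharm, hu_one⟩ := hu
  have hf : Measurable fun x => ENNReal.ofReal (u x) := ENNReal.measurable_ofReal.comp hmeas
  have hmean (n : ℕ) (a : G) := hharm.lintegral_ofReal_mul_left_convPow hpos hmeas n a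
  calc ENNReal.ofReal (u g)
      = ∫⁻ x, ENNReal.ofReal (u x) ∂(convPow θ k).map (fun x => g * x) := by
        rw [lintegral_map hf (measurable_const_mul g), hmean]
    _ ≤ ∫⁻ x, ENNReal.ofReal (u x) ∂(∑ r ∈ s, c r • convPow θ (ks r)) :=
        lintegral_mono' hsuit le_rfl
    _ = ∑ r ∈ s, c r := by
        rw [lintegral_finsetSum_measure]
        refine Finset.sum_congr rfl fun r _ => ?_
        simpa [hu_one] using congrArg (c r * ·) (hmean (ks r) 1)

end Harmonic

theorem stmt_4_general {G : Type*} [Group G] [TopologicalSpace G] [IsTopologicalGroup G]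
    [SecondCountableTopology G]
    [MeasurableSpace G] [BorelSpace G]
    (θ : Measure G) [IsProbabilityMeasure θ]
    (g : G) (R : ℕ) (k : ℕ) (ks : Fin R → ℕ) (α : Fin R → ℝ)
    (hα : ∀ r, 0 < α r)
    (hsuit : (convPow θ k).map (fun x => g * x) ≤
      ∑ r : Fin R, ENNReal.ofReal (α r) • convPow θ (ks r)) :
    (∀ u ∈ harmCone θ, u g ≤ ∑ r : Fin R, α r) ∧
      majorant θ g ≤ ENNReal.ofReal (∑ r : Fin R, α r) := by
  have hα₀ : ∀ r ∈ Finset.univ, 0 ≤ α r := fun r _ => (hα r).le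
  have hbound : ∀ u ∈ harmCone θ, u g ≤ ∑ r : Fin R, α r := fun u hu =>
    (ENNReal.ofReal_le_ofReal_iff (Finset.sum_nonneg hα₀)).mp <|
      (ENNReal.ofReal_sum_of_nonneg hα₀).symm ▸ ofReal_le_sum_of_map_convPow_le hu hsuit
  exact ⟨hbound, iSup₂_le fun u hu => ENNReal.ofReal_le_ofReal (hbound u hu)⟩

/-- If `g` is `θ`-suitable, i.e. `gθ^{∗k} ≤ Σ_r α_r θ^{∗k_r}` as measures for some
`R ≥ 1`, `k, k_1, …, k_R ≥ 0` and `α_1, …, α_R > 0`, then `u(g) ≤ Σ_r α_r` for every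
positive `θ`-harmonic `u` with `u(e) = 1`; hence `𝔪_θ(g) ≤ Σ_r α_r < ∞`. -/
theorem stmt_4 {G : Type*} [Group G] [TopologicalSpace G] [IsTopologicalGroup G]
    [LocallyCompactSpace G] [SecondCountableTopology G]
    [MeasurableSpace G] [BorelSpace G]
    (mG : Measure G) [mG.IsHaarMeasure]
    (θ : Measure G) [IsProbabilityMeasure θ]
    (g : G) (R : ℕ) (hR : 1 ≤ R) (k : ℕ) (ks : Fin R → ℕ) (α : Fin R → ℝ)
    (hα : ∀ r, 0 < α r)
    (hsuit : (convPow θ k).map (fun x => g * x) ≤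
      ∑ r : Fin R, ENNReal.ofReal (α r) • convPow θ (ks r)) :
    (∀ u ∈ harmCone θ, u g ≤ ∑ r : Fin R, α r) ∧
      majorant θ g ≤ ENNReal.ofReal (∑ r : Fin R, α r) :=
  stmt_4_general θ g R k ks α hα hsuit
end

section
/- Let (X,μ) be a stationary (G,θ)-space. Then for every g ∈ G, the Radon–Nikodym derivative satisfies 𝔪_θ(g⁻¹)⁻¹ ≤ (dgμ/dμ)(x) ≤ 𝔪_θ(g) for μ-almost every x ∈ X, where 𝔪_θ is the harmonic majorant of (G,θ). -/
/-!
For measurable `A` with `μ A > 0`, stationarity makes `g ↦ μ(g⁻¹A) / μ(A)` a θ-harmonic function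
with value `1` at `e`, and quasi-invariance makes it positive. Hence `μ(g⁻¹A) ≤ 𝔪_θ(g) μ(A)` for
all `A`, i.e. `gμ ≤ 𝔪_θ(g) μ`, which bounds `d(gμ)/dμ` from above. The same inequality for `g⁻¹`
and the set `g⁻¹A` reads `μ ≤ 𝔪_θ(g⁻¹) gμ`, which gives the lower bound.
-/

open MeasureTheory ENNReal

lemma one_mem_harmCone {G : Type*} [Group G] [MeasurableSpace G] (θ : Measure G)
    [IsProbabilityMeasure θ] : (fun _ : G => (1 : ℝ)) ∈ harmCone θ :=
  ⟨measurable_const, fun _ => one_pos, fun _ => by simp, rfl⟩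

lemma ofReal_le_majorant {G : Type*} [Group G] [MeasurableSpace G] {θ : Measure G}
    {u : G → ℝ} (hu : u ∈ harmCone θ) (g : G) : ENNReal.ofReal (u g) ≤ majorant θ g :=
  le_iSup₂ (f := fun v (_ : v ∈ harmCone θ) => ENNReal.ofReal (v g)) u hu

lemma one_le_majorant {G : Type*} [Group G] [MeasurableSpace G] (θ : Measure G)
    [IsProbabilityMeasure θ] (g : G) : 1 ≤ majorant θ g := by
  simpa using ofReal_le_majorant (one_mem_harmCone θ) g

section RadonNikodym

variable {α : Type*} [MeasurableSpace α] {ν μ : Measure α} [ν.HaveLebesgueDecomposition μ]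
  [SigmaFinite μ] {c : ℝ≥0∞}

lemma ae_rnDeriv_le_of_forall_le_mul (hνμ : ν ≪ μ)
    (h : ∀ s, MeasurableSet s → ν s ≤ c * μ s) : ∀ᵐ x ∂μ, ν.rnDeriv μ x ≤ c := by
  refine ae_le_of_forall_setLIntegral_le_of_sigmaFinite (Measure.measurable_rnDeriv ν μ)
    fun s hs _ => ?_
  rw [Measure.setLIntegral_rnDeriv' hνμ hs, setLIntegral_const]
  exact h s hs

lemma ae_le_rnDeriv_of_forall_mul_le (hνμ : ν ≪ μ)
    (h : ∀ s, MeasurableSet s → c * μ s ≤ ν s) : ∀ᵐ x ∂μ, c ≤ ν.rnDeriv μ x := by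
  refine ae_le_of_forall_setLIntegral_le_of_sigmaFinite measurable_const fun s hs _ => ?_
  rw [Measure.setLIntegral_rnDeriv' hνμ hs, setLIntegral_const]
  exact h s hs

end RadonNikodym

lemma preimage_smul_preimage_smul {G X : Type*} [Group G] [MulAction G X] (g h : G)
    (A : Set X) : (h • ·) ⁻¹' ((g • ·) ⁻¹' A) = ((g * h) • ·) ⁻¹' A := by
  ext x
  simp [mul_smul]

section Stationary

variable {G X : Type*} [Group G] [MeasurableSpace G] [MeasurableSpace X] [MulAction G X]
  [MeasurableSMul₂ G X] {θ : Measure G} {μ : Measure X} {A : Set X}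

-- `(g • ·) ⁻¹' A = g⁻¹A`; identically `0` when `μ A = 0`.
noncomputable def translateRatio (μ : Measure X) (A : Set X) (g : G) : ℝ :=
  (μ ((g • ·) ⁻¹' A)).toReal / (μ A).toReal

lemma measurable_measure_preimage_smul [SFinite μ] (hA : MeasurableSet A) :
    Measurable fun g : G => μ ((g • ·) ⁻¹' A) :=
  measurable_measure_prodMk_left ((measurable_fst.smul measurable_snd) hA)

lemma measure_preimage_smul_ne_zero (hqi : ∀ g : G, μ.map (g • ·) ≪ μ)
    (hA : MeasurableSet A) (hA0 : μ A ≠ 0) (g : G) : μ ((g • ·) ⁻¹' A) ≠ 0 := by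
  intro hzero
  have := hqi g⁻¹ hzero
  rw [Measure.map_apply (measurable_const_smul g⁻¹) (measurable_const_smul g hA),
    preimage_smul_preimage_smul, mul_inv_cancel] at this
  simp only [one_smul, Set.preimage_id'] at this
  exact hA0 this

lemma lintegral_measure_preimage_mul_smul
    (hstat : ∀ s : Set X, MeasurableSet s → ∫⁻ g, μ.map (g • ·) s ∂θ = μ s)
    (hA : MeasurableSet A) (g : G) :
    ∫⁻ h, μ (((g * h) • ·) ⁻¹' A) ∂θ = μ ((g • ·) ⁻¹' A) := by
  rw [← hstat _ (measurable_const_smul g hA)]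
  refine lintegral_congr fun h => ?_
  rw [Measure.map_apply (measurable_const_smul h) (measurable_const_smul g hA),
    preimage_smul_preimage_smul]

lemma isHarmonic_translateRatio [IsFiniteMeasure μ]
    (hstat : ∀ s : Set X, MeasurableSet s → ∫⁻ g, μ.map (g • ·) s ∂θ = μ s)
    (hA : MeasurableSet A) : IsHarmonic θ (translateRatio μ A) := by
  intro g
  have hmeas : Measurable fun h : G => μ (((g * h) • ·) ⁻¹' A) := by
    simpa only [preimage_smul_preimage_smul] using
      measurable_measure_preimage_smul (G := G) (μ := μ) (measurable_const_smul g hA)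
  simp only [translateRatio]
  rw [integral_div, integral_toReal hmeas.aemeasurable (ae_of_all _ fun _ => measure_lt_top _ _),
    lintegral_measure_preimage_mul_smul hstat hA]

lemma translateRatio_mem_harmCone [IsFiniteMeasure μ]
    (hstat : ∀ s : Set X, MeasurableSet s → ∫⁻ g, μ.map (g • ·) s ∂θ = μ s)
    (hqi : ∀ g : G, μ.map (g • ·) ≪ μ) (hA : MeasurableSet A) (hA0 : μ A ≠ 0) :
    translateRatio μ A ∈ harmCone θ := by
  have hA_pos : 0 < (μ A).toReal := ENNReal.toReal_pos hA0 (measure_ne_top μ A)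
  refine ⟨(measurable_measure_preimage_smul hA).ennreal_toReal.div_const _, fun g => ?_,
    isHarmonic_translateRatio hstat hA, ?_⟩
  · exact div_pos (ENNReal.toReal_pos (measure_preimage_smul_ne_zero hqi hA hA0 g)
      (measure_ne_top μ _)) hA_pos
  · simp only [translateRatio, one_smul, Set.preimage_id']
    exact div_self hA_pos.ne'

lemma measure_preimage_smul_le_majorant_mul [IsFiniteMeasure μ]
    (hstat : ∀ s : Set X, MeasurableSet s → ∫⁻ g, μ.map (g • ·) s ∂θ = μ s)
    (hqi : ∀ g : G, μ.map (g • ·) ≪ μ) (hA : MeasurableSet A) (g : G) :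
    μ ((g • ·) ⁻¹' A) ≤ majorant θ g * μ A := by
  by_cases hA0 : μ A = 0
  · have := hqi g hA0
    rw [Measure.map_apply (measurable_const_smul g) hA] at this
    simp [this]
  have hle := ofReal_le_majorant (translateRatio_mem_harmCone hstat hqi hA hA0) g
  rwa [translateRatio, ENNReal.ofReal_div_of_pos (ENNReal.toReal_pos hA0 (measure_ne_top μ A)),
    ENNReal.ofReal_toReal (measure_ne_top μ _), ENNReal.ofReal_toReal (measure_ne_top μ A),
    ENNReal.div_le_iff_le_mul (Or.inl hA0) (Or.inl (measure_ne_top μ A))] at hle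

lemma measure_le_majorant_inv_mul [IsFiniteMeasure μ]
    (hstat : ∀ s : Set X, MeasurableSet s → ∫⁻ g, μ.map (g • ·) s ∂θ = μ s)
    (hqi : ∀ g : G, μ.map (g • ·) ≪ μ) (hA : MeasurableSet A) (g : G) :
    μ A ≤ majorant θ g⁻¹ * μ ((g • ·) ⁻¹' A) := by
  simpa only [preimage_smul_preimage_smul, mul_inv_cancel, one_smul, Set.preimage_id'] using
    measure_preimage_smul_le_majorant_mul hstat hqi (measurable_const_smul g hA) g⁻¹

end Stationary

theorem stmt_6_general {G X : Type*} [Group G] [MeasurableSpace G] [MeasurableSpace X]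
    (θ : Measure G) [IsProbabilityMeasure θ]
    [MulAction G X] (hact : Measurable fun p : G × X => p.1 • p.2)
    (μ : Measure X) [IsProbabilityMeasure μ]
    (hstat : ∀ s : Set X, MeasurableSet s → ∫⁻ g, μ.map (g • · : X → X) s ∂θ = μ s)
    (hqi : ∀ g : G, μ.map (g • · : X → X) ≪ μ)
    (g : G) :
    ∀ᵐ x ∂μ, (majorant θ g⁻¹)⁻¹ ≤ (μ.map (g • · : X → X)).rnDeriv μ x ∧
      (μ.map (g • · : X → X)).rnDeriv μ x ≤ majorant θ g := by
  have : MeasurableSMul₂ G X := ⟨hact⟩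
  have hmap : ∀ s, MeasurableSet s → μ.map (g • ·) s = μ ((g • ·) ⁻¹' s) :=
    fun s => Measure.map_apply (measurable_const_smul g)
  have lower : ∀ s, MeasurableSet s → (majorant θ g⁻¹)⁻¹ * μ s ≤ μ.map (g • ·) s := by
    intro s hs
    rcases eq_or_ne (majorant θ g⁻¹) ∞ with htop | htop
    · simp [htop]
    rw [hmap s hs,
      ENNReal.inv_mul_le_iff (zero_lt_one.trans_le (one_le_majorant θ g⁻¹)).ne' htop]
    exact measure_le_majorant_inv_mul hstat hqi hs g
  have upper : ∀ s, MeasurableSet s → μ.map (g • ·) s ≤ majorant θ g * μ s := fun s hs =>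
    hmap s hs ▸ measure_preimage_smul_le_majorant_mul hstat hqi hs g
  filter_upwards [ae_le_rnDeriv_of_forall_mul_le (hqi g) lower,
    ae_rnDeriv_le_of_forall_le_mul (hqi g) upper] with x hlower hupper
  exact ⟨hlower, hupper⟩

/-- For a stationary `(G,θ)`-space `(X,μ)` and every `g ∈ G`, the Radon–Nikodym
derivative satisfies `𝔪_θ(g⁻¹)⁻¹ ≤ d(gμ)/dμ ≤ 𝔪_θ(g)` almost everywhere. -/
theorem stmt_6 {G X : Type*} [Group G] [TopologicalSpace G] [IsTopologicalGroup G]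
    [LocallyCompactSpace G] [SecondCountableTopology G]
    [MeasurableSpace G] [BorelSpace G]
    [MeasurableSpace X] [StandardBorelSpace X]
    (mG : Measure G) [mG.IsHaarMeasure]
    (θ : Measure G) [IsProbabilityMeasure θ] (hadm : IsAdmissible mG θ)
    [MulAction G X] (hact : Measurable fun p : G × X => p.1 • p.2)
    (μ : Measure X) [IsProbabilityMeasure μ]
    (hstat : ∀ s : Set X, MeasurableSet s → ∫⁻ g, μ.map (g • · : X → X) s ∂θ = μ s)
    (hqi : ∀ g : G, μ.map (g • · : X → X) ≪ μ)
    (g : G) :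
    ∀ᵐ x ∂μ, (majorant θ g⁻¹)⁻¹ ≤ (μ.map (g • · : X → X)).rnDeriv μ x ∧
      (μ.map (g • · : X → X)).rnDeriv μ x ≤ majorant θ g :=
  stmt_6_general θ hact μ hstat hqi g
end

section
/- Let (G,θ) be a noncompact measured group, (Ω,ℙ) = (G^ℕ, θ^{⊗ℕ}), and z_n(ω) = ω_0ω_1⋯ω_{n-1} the right random walk. Then for every compact subset C of G, ℙ(liminf_{n→∞} {z_n ∈ C}) = 0; that is, almost surely the random walk does not eventually stay in C. -/
open MeasureTheory ENNReal

open Pointwise Filter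

/-!
Let `C` be compact. Since `G` is noncompact, the open set `W = (closure (C⁻¹ * C))ᶜ` is nonempty,
and since the closed subsemigroup generated by the support of `θ` is all of `G`, some product
`s₀ ⋯ s_{m-1}` of points of the support lies in `W`. By continuity of multiplication there are
finitely many open sets of positive `θ`-measure constraining coordinates so that any word
satisfying the constraints still has its length-`m` product in `W`. Imposing these constraints on
disjoint blocks of coordinates gives independent events of equal positive probability, so by the
second Borel–Cantelli lemma almost surely infinitely many blocks satisfy them. For such a block
starting at time `n`, `z_n⁻¹ z_{n+m} ∈ W`, so `z_n` and `z_{n+m}` cannot both lie in `C`.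
-/

def rightWalk {G : Type*} [Monoid G] (ω : ℕ → G) (n : ℕ) : G :=
  ((List.range n).map ω).prod

section RightWalk

variable {G : Type*}

lemma rightWalk_add [Monoid G] (ω : ℕ → G) (n m : ℕ) :
    rightWalk ω (n + m) = rightWalk ω n * rightWalk (fun j => ω (n + j)) m := by
  simp [rightWalk, List.range_add, List.map_map, Function.comp_def]

lemma rightWalk_getD_length [Monoid G] (l : List G) (d : G) :
    rightWalk (fun i => l.getD i d) l.length = l.prod := by
  unfold rightWalk
  congr 1
  refine List.ext_getElem (by simp) fun i h₁ h₂ => ?_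
  simp [List.getElem?_eq_getElem h₂]

lemma rightWalk_shift_mem_inv_mul [Group G] {C : Set G} {ω : ℕ → G} {n m : ℕ}
    (hn : rightWalk ω n ∈ C) (hnm : rightWalk ω (n + m) ∈ C) :
    rightWalk (fun j => ω (n + j)) m ∈ C⁻¹ * C := by
  rw [rightWalk_add] at hnm
  simpa using Set.mul_mem_mul (Set.inv_mem_inv.2 hn) hnm

lemma exists_cylinder_forall_rightWalk_mem [Monoid G] [TopologicalSpace G] [ContinuousMul G]
    {W : Set G} (hW : IsOpen W) {s : ℕ → G} {m : ℕ} (hs : rightWalk s m ∈ W) :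
    ∃ (I : Finset ℕ) (u : ℕ → Set G), (∀ a ∈ I, IsOpen (u a) ∧ s a ∈ u a) ∧
      ∀ x : ℕ → G, (∀ a ∈ I, x a ∈ u a) → rightWalk x m ∈ W := by
  have hcont : Continuous fun x : ℕ → G => rightWalk x m :=
    continuous_list_prod _ fun i _ => continuous_apply i
  obtain ⟨I, u, hu, hIu⟩ := isOpen_pi_iff.1 (hW.preimage hcont) s hs
  exact ⟨I, u, hu, fun x hx => hIu hx⟩

end RightWalk

section Admissible

variable {G : Type*} [Group G] [TopologicalSpace G] [MeasurableSpace G] {mG θ : Measure G}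

lemma IsAdmissible.dense_submonoidClosure [ContinuousMul G] (hadm : IsAdmissible mG θ)
    {D : Set G} (hD : θ Dᶜ = 0) : Dense (Submonoid.closure D : Set G) := by
  rw [dense_iff_closure_eq, ← Submonoid.coe_topologicalClosure]
  refine hadm.2 _ (Submonoid.isClosed_topologicalClosure _)
    (fun a ha b hb => Submonoid.mul_mem _ ha hb) (measure_mono_null ?_ hD)
  exact Set.compl_subset_compl.2
    (Submonoid.subset_closure.trans (Submonoid.le_topologicalClosure _))

lemma IsAdmissible.exists_rightWalk_mem [ContinuousMul G] [HereditarilyLindelofSpace G]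
    [NeZero θ] (hadm : IsAdmissible mG θ) {W : Set G} (hW : IsOpen W) (hWne : W.Nonempty) :
    ∃ (m : ℕ) (s : ℕ → G), (∀ i, s i ∈ θ.support) ∧ rightWalk s m ∈ W := by
  obtain ⟨t, ht, htW⟩ :=
    (hadm.dense_submonoidClosure Measure.measure_compl_support).exists_mem_open hW hWne
  obtain ⟨l, hl, rfl⟩ := Submonoid.exists_list_of_mem_closure ht
  obtain ⟨d, hd⟩ := Measure.nonempty_support (NeZero.ne θ)
  refine ⟨l.length, fun i => l.getD i d, fun i => ?_, by rwa [rightWalk_getD_length]⟩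
  simp only [List.getD_eq_getElem?_getD]
  cases h : l[i]? with
  | none => exact hd
  | some x => exact hl x (List.mem_of_getElem? h)

end Admissible

section IIDCoordinates

variable {G : Type*} [MeasurableSpace G]

def HasIIDCoordinates (P : Measure (ℕ → G)) (θ : Measure G) : Prop :=
  ∀ (n : ℕ) (s : ℕ → Set G), (∀ i, MeasurableSet (s i)) →
    P {ω | ∀ i < n, ω i ∈ s i} = ∏ i ∈ Finset.range n, θ (s i)

def blockCylinder (I : Finset ℕ) (u : ℕ → Set G) (M k : ℕ) : Set (ℕ → G) :=
  {ω | ∀ a ∈ I, ω (k * M + a) ∈ u a}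

variable {P : Measure (ℕ → G)} {θ : Measure G} [IsProbabilityMeasure θ]

lemma HasIIDCoordinates.measure_forall_mem (hP : HasIIDCoordinates P θ) (I : Finset ℕ)
    {s : ℕ → Set G} (hs : ∀ i ∈ I, MeasurableSet (s i)) :
    P {ω | ∀ i ∈ I, ω i ∈ s i} = ∏ i ∈ I, θ (s i) := by
  classical
  obtain ⟨n, hIn⟩ := I.exists_nat_subset_range
  have h := hP n (fun i => if i ∈ I then s i else Set.univ) fun i => by
    split_ifs with hi
    exacts [hs i hi, .univ]
  convert h using 1
  · congr 1
    ext ω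
    refine ⟨fun hω i _ => ?_, fun hω i hi => ?_⟩
    · split_ifs with hi
      exacts [hω i hi, trivial]
    · simpa [hi] using hω i (Finset.mem_range.1 (hIn hi))
  · simp_rw [apply_ite θ, measure_univ, Finset.prod_ite_mem, Finset.inter_eq_right.2 hIn]

lemma HasIIDCoordinates.measure_biInter_blockCylinder (hP : HasIIDCoordinates P θ)
    {I : Finset ℕ} {M : ℕ} (hIM : I ⊆ Finset.range M) {u : ℕ → Set G}
    (hu : ∀ a ∈ I, MeasurableSet (u a)) (F : Finset ℕ) :
    P (⋂ k ∈ F, blockCylinder I u M k) = ∏ _k ∈ F, ∏ a ∈ I, θ (u a) := by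
  have hdivmod : ∀ k, ∀ a ∈ I, (k * M + a) / M = k ∧ (k * M + a) % M = a := fun k a ha => by
    have ha' := Finset.mem_range.1 (hIM ha)
    exact (Nat.div_mod_unique (by omega)).2 ⟨by ring, ha'⟩
  have hinj : Set.InjOn (fun p : ℕ × ℕ => p.1 * M + p.2) ↑(F ×ˢ I) := by
    rintro ⟨k, a⟩ hka ⟨k', a'⟩ hka' h
    simp only [Finset.coe_product, Set.mem_prod, Finset.mem_coe] at hka hka' h
    obtain ⟨hk, ha⟩ := hdivmod k a hka.2
    obtain ⟨hk', ha'⟩ := hdivmod k' a' hka'.2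
    rw [h] at hk ha
    exact Prod.ext (hk.symm.trans hk') (ha.symm.trans ha')
  set J := (F ×ˢ I).image fun p : ℕ × ℕ => p.1 * M + p.2
  have hJ : ⋂ k ∈ F, blockCylinder I u M k = {ω | ∀ i ∈ J, ω i ∈ u (i % M)} := by
    ext ω
    simp only [Set.mem_iInter, Set.mem_ofPred_eq, blockCylinder, J, Finset.forall_mem_image,
      Finset.mem_product, Prod.forall, and_imp]
    constructor
    · intro h k a hk ha
      rw [(hdivmod k a ha).2]
      exact h k hk a ha
    · intro h k hk a ha
      simpa only [(hdivmod k a ha).2] using h k a hk ha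
  have hJmeas : ∀ i ∈ J, MeasurableSet (u (i % M)) := by
    simp only [J, Finset.forall_mem_image, Finset.mem_product, Prod.forall, and_imp]
    intro k a _ ha
    rw [(hdivmod k a ha).2]
    exact hu a ha
  rw [hJ, hP.measure_forall_mem J hJmeas, Finset.prod_image hinj, Finset.prod_product]
  exact Finset.prod_congr rfl fun k _ => Finset.prod_congr rfl fun a ha => by
    rw [(hdivmod k a ha).2]

lemma HasIIDCoordinates.ae_frequently_mem_blockCylinder (hP : HasIIDCoordinates P θ)
    {I : Finset ℕ} {M : ℕ} (hIM : I ⊆ Finset.range M) {u : ℕ → Set G}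
    (hu : ∀ a ∈ I, MeasurableSet (u a)) (hpos : ∀ a ∈ I, θ (u a) ≠ 0) :
    ∀ᵐ ω ∂P, ∃ᶠ k in atTop, ω ∈ blockCylinder I u M k := by
  have hmeas : ∀ k, MeasurableSet (blockCylinder I u M k) := fun k => by
    simp only [blockCylinder, Set.ofPred_forall]
    exact .iInter fun a => .iInter fun ha => measurable_pi_apply _ (hu a ha)
  have hB : ∀ k, P (blockCylinder I u M k) = ∏ a ∈ I, θ (u a) := fun k => by
    simpa using hP.measure_biInter_blockCylinder hIM hu {k}
  have hindep : ProbabilityTheory.iIndepSet (blockCylinder I u M) P := by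
    refine (ProbabilityTheory.iIndepSet_iff_meas_biInter hmeas).2 fun F => ?_
    simp_rw [hP.measure_biInter_blockCylinder hIM hu, hB]
  have := hindep.isProbabilityMeasure
  have hlimsup := ProbabilityTheory.measure_limsup_eq_one hmeas hindep <| by
    simp_rw [hB]
    exact ENNReal.tsum_const_eq_top_of_ne_zero (Finset.prod_ne_zero_iff.2 hpos)
  have hae : ∀ᵐ ω ∂P, ω ∈ limsup (blockCylinder I u M) atTop :=
    (ae_mem_iff_measure_eq (MeasurableSet.measurableSet_limsup hmeas).nullMeasurableSet).2
      (by rw [hlimsup, measure_univ])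
  filter_upwards [hae] with ω hω using mem_limsup_iff_frequently_mem.1 hω

end IIDCoordinates

theorem stmt_7_general {G : Type*} [Group G] [TopologicalSpace G] [IsTopologicalGroup G]
    [SecondCountableTopology G] [NoncompactSpace G]
    [MeasurableSpace G] [BorelSpace G]
    (mG : Measure G)
    (θ : Measure G) [IsProbabilityMeasure θ] (hadm : IsAdmissible mG θ)
    (P : Measure (ℕ → G))
    (hiid : ∀ (n : ℕ) (s : ℕ → Set G), (∀ i, MeasurableSet (s i)) →
      P {ω | ∀ i < n, ω i ∈ s i} = ∏ i ∈ Finset.range n, θ (s i))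
    (C : Set G) (hC : IsCompact C) :
    P (Filter.atTop.liminf fun n : ℕ =>
        {ω : ℕ → G | ((List.range n).map ω).prod ∈ C}) = 0 := by
  set W := (closure (C⁻¹ * C))ᶜ
  have hW : IsOpen W := isClosed_closure.isOpen_compl
  have hWne : W.Nonempty := Set.nonempty_compl.2 (hC.inv.mul hC).closure.ne_univ
  obtain ⟨m, s, hsθ, hsW⟩ := hadm.exists_rightWalk_mem hW hWne
  obtain ⟨I, u, hu, hIu⟩ := exists_cylinder_forall_rightWalk_mem hW hsW
  obtain ⟨M, hIM⟩ := I.exists_nat_subset_range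
  have hP : HasIIDCoordinates P θ := hiid
  -- blocks of length `M + 1`, so that block `k` starts at a time `≥ k`
  have hfreq := hP.ae_frequently_mem_blockCylinder
    (hIM.trans (Finset.range_subset_range.2 M.le_succ)) (fun a ha => (hu a ha).1.measurableSet)
    fun a ha => ((Measure.mem_support_iff_forall _).1 (hsθ a) _
      ((hu a ha).1.mem_nhds (hu a ha).2)).ne'
  rw [measure_eq_zero_iff_ae_notMem]
  filter_upwards [hfreq] with ω hω hstay
  obtain ⟨N, hN⟩ := eventually_atTop.1 (mem_liminf_iff_eventually_mem.1 hstay)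
  obtain ⟨k, hk, hblock⟩ := frequently_atTop.1 hω N
  have hkN : N ≤ k * (M + 1) := hk.trans (Nat.le_mul_of_pos_right k M.succ_pos)
  exact hIu _ hblock <| subset_closure <| rightWalk_shift_mem_inv_mul (ω := ω)
    (hN _ hkN) (hN _ (hkN.trans (Nat.le_add_right _ m)))

/-- For the right random walk `z_n = ω_0 ω_1 ⋯ ω_{n-1}` driven by an admissible measure
`θ` on a noncompact lcsc group `G`, and any compact `C ⊆ G`, almost surely the walk does
not eventually stay in `C`: `ℙ(liminf {z_n ∈ C}) = 0`. -/
theorem stmt_7 {G : Type*} [Group G] [TopologicalSpace G] [IsTopologicalGroup G]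
    [LocallyCompactSpace G] [SecondCountableTopology G] [NoncompactSpace G]
    [MeasurableSpace G] [BorelSpace G]
    (mG : Measure G) [mG.IsHaarMeasure]
    (θ : Measure G) [IsProbabilityMeasure θ] (hadm : IsAdmissible mG θ)
    (P : Measure (ℕ → G)) [IsProbabilityMeasure P]
    (hiid : ∀ (n : ℕ) (s : ℕ → Set G), (∀ i, MeasurableSet (s i)) →
      P {ω | ∀ i < n, ω i ∈ s i} = ∏ i ∈ Finset.range n, θ (s i))
    (C : Set G) (hC : IsCompact C) :
    P (Filter.atTop.liminf fun n : ℕ =>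
        {ω : ℕ → G | ((List.range n).map ω).prod ∈ C}) = 0 :=
  stmt_7_general mG θ hadm P hiid C hC
end

section
/- Let (X,μ) be a stationary (G,θ)-space, T_θ : L^∞(μ) → L^∞(μ) the Markov operator T_θ f(x) = ∫_G f(g.x) dθ(g). For f ∈ L^∞(μ), if T_θ f = f then f is G-invariant (gf = f μ-a.e. for every g ∈ G); the converse is immediate. -/
/-! Stationarity gives `∫∫ (f(g x) - f x)² dθ(g) dμ(x) = 2 ∫ f² dμ - 2 ∫ (T_θ f) f dμ`, which
vanishes when `T_θ f = f`, so `f` is invariant under θ-almost every `g`. Quasi-invariance of `μ`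
makes the elements fixing `f` almost everywhere a subgroup; being θ-conull it has positive Haar
measure, so it is open by Steinhaus' theorem, hence closed, and admissibility of `θ` forces it to
be all of `G`. -/

open MeasureTheory ENNReal

section Stationary

variable {G X : Type*} [Group G] [MeasurableSpace G] [MeasurableSpace X] [MulAction G X]
  {θ : Measure G} {μ : Measure X}

def IsStationaryMeasure (θ : Measure G) (μ : Measure X) : Prop :=
  ∀ s : Set X, MeasurableSet s → ∫⁻ g, μ.map (g • · : X → X) s ∂θ = μ s

noncomputable def markovOperator (θ : Measure G) (f : X → ℝ) (x : X) : ℝ :=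
  ∫ g, f (g • x) ∂θ

theorem map_smul_prod_eq_of_stationary [SFinite θ] [SFinite μ]
    (hact : Measurable fun p : G × X => p.1 • p.2) (hstat : IsStationaryMeasure θ μ) :
    (θ.prod μ).map (fun p : G × X => p.1 • p.2) = μ := by
  ext s hs
  rw [Measure.map_apply hact hs, Measure.prod_apply (hact hs), ← hstat s hs]
  refine lintegral_congr fun g => ?_
  have hsmul : Measurable (g • · : X → X) := hact.comp measurable_prodMk_left
  rw [Measure.map_apply hsmul hs]
  rfl

theorem integral_comp_smul_of_stationary [SFinite θ] [SFinite μ]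
    (hact : Measurable fun p : G × X => p.1 • p.2)
    (hstat : IsStationaryMeasure θ μ) {φ : X → ℝ} (hφ : Measurable φ) :
    ∫ p : G × X, φ (p.1 • p.2) ∂θ.prod μ = ∫ x, φ x ∂μ := by
  conv_rhs => rw [← map_smul_prod_eq_of_stationary hact hstat]
  exact (integral_map hact.aemeasurable hφ.aestronglyMeasurable).symm

theorem integral_sq_sub_smul_eq [IsProbabilityMeasure θ] [IsProbabilityMeasure μ]
    (hact : Measurable fun p : G × X => p.1 • p.2) (hstat : IsStationaryMeasure θ μ)
    {f : X → ℝ} (hf : Measurable f) {C : ℝ} (hC : ∀ x, |f x| ≤ C) :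
    ∫ p : G × X, (f (p.1 • p.2) - f p.2) ^ 2 ∂θ.prod μ
      = 2 * ∫ x, f x ^ 2 ∂μ - 2 * ∫ x, markovOperator θ f x * f x ∂μ := by
  have hbound : ∀ a b : X, ‖f a * f b‖ ≤ C * C := fun a b => by
    rw [norm_mul]; exact mul_le_mul (hC a) (hC b) (norm_nonneg _) ((abs_nonneg _).trans (hC a))
  have hint : ∀ a b : G × X → X, Measurable a → Measurable b →
      Integrable (fun p => f (a p) * f (b p)) (θ.prod μ) := fun a b ha hb =>
    .of_bound ((hf.comp ha).mul (hf.comp hb)).aestronglyMeasurable _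
      (ae_of_all _ fun _ => hbound _ _)
  have hFF : Integrable (fun p : G × X => f (p.1 • p.2) * f (p.1 • p.2)) (θ.prod μ) :=
    hint _ _ hact hact
  have hSS : Integrable (fun p : G × X => f p.2 * f p.2) (θ.prod μ) :=
    hint _ _ measurable_snd measurable_snd
  have hFS : Integrable (fun p : G × X => f (p.1 • p.2) * f p.2) (θ.prod μ) :=
    hint _ _ hact measurable_snd
  have hcross : ∫ p : G × X, f (p.1 • p.2) * f p.2 ∂θ.prod μ
      = ∫ x, markovOperator θ f x * f x ∂μ := by
    rw [integral_prod_symm _ hFS]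
    exact integral_congr_ae (ae_of_all _ fun x => integral_mul_const (f x) _)
  calc ∫ p : G × X, (f (p.1 • p.2) - f p.2) ^ 2 ∂θ.prod μ
      = ∫ p : G × X, (f (p.1 • p.2) * f (p.1 • p.2) + f p.2 * f p.2
          - 2 * (f (p.1 • p.2) * f p.2)) ∂θ.prod μ := by congr 1; ext p; ring
    _ = _ := by
      have hsum : Integrable (fun p : G × X => f (p.1 • p.2) * f (p.1 • p.2) + f p.2 * f p.2)
          (θ.prod μ) := hFF.add hSS
      rw [integral_sub hsum (hFS.const_mul 2), integral_add hFF hSS,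
        integral_const_mul, hcross, integral_fun_snd (fun x => f x * f x),
        integral_comp_smul_of_stationary hact hstat (φ := fun x => f x * f x) (hf.mul hf)]
      simp only [probReal_univ, one_smul, sq]
      ring

theorem ae_ae_smul_eq_of_markovOperator_eq [IsProbabilityMeasure θ] [IsProbabilityMeasure μ]
    (hact : Measurable fun p : G × X => p.1 • p.2) (hstat : IsStationaryMeasure θ μ)
    {f : X → ℝ} (hf : Measurable f) {C : ℝ} (hC : ∀ x, |f x| ≤ C)
    (hT : ∀ᵐ x ∂μ, markovOperator θ f x = f x) :
    ∀ᵐ g ∂θ, ∀ᵐ x ∂μ, f (g • x) = f x := by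
  have hint : Integrable (fun p : G × X => (f (p.1 • p.2) - f p.2) ^ 2) (θ.prod μ) := by
    refine .of_bound
      (((hf.comp hact).sub (hf.comp measurable_snd)).pow_const 2).aestronglyMeasurable
      ((C + C) ^ 2) (ae_of_all _ fun p => ?_)
    rw [Real.norm_eq_abs, abs_pow]
    exact pow_le_pow_left₀ (abs_nonneg _) ((abs_sub _ _).trans (add_le_add (hC _) (hC _))) 2
  have hzero : ∫ p : G × X, (f (p.1 • p.2) - f p.2) ^ 2 ∂θ.prod μ = 0 := by
    rw [integral_sq_sub_smul_eq hact hstat hf hC, integral_congr_ae (hT.mono fun x hx =>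
      show markovOperator θ f x * f x = f x ^ 2 by rw [hx, sq]), sub_self]
  have hsq := (integral_eq_zero_iff_of_nonneg (fun p => sq_nonneg _) hint).1 hzero
  exact Measure.ae_ae_of_ae_prod
    (hsq.mono fun p hp => sub_eq_zero.1 ((pow_eq_zero_iff two_ne_zero).1 hp))

theorem markovOperator_ae_eq_of_forall_ae_smul_eq [IsProbabilityMeasure θ] [SFinite μ]
    (hact : Measurable fun p : G × X => p.1 • p.2) {f : X → ℝ} (hf : Measurable f)
    (hinv : ∀ g : G, ∀ᵐ x ∂μ, f (g • x) = f x) :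
    ∀ᵐ x ∂μ, markovOperator θ f x = f x := by
  have hset : MeasurableSet {p : X × G | f (p.2 • p.1) = f p.1} :=
    measurableSet_eq_fun (hf.comp (hact.comp measurable_swap)) (hf.comp measurable_fst)
  filter_upwards [(Measure.ae_ae_comm hset).2 (ae_of_all θ hinv)] with x hx
  rw [markovOperator, integral_congr_ae hx, integral_const, probReal_univ, one_smul]

end Stationary

def aeStabilizer {G X : Type*} [Group G] [MeasurableSpace X] [MulAction G X] (μ : Measure X)
    (hqi : ∀ g : G, Measure.QuasiMeasurePreserving (g • · : X → X) μ μ) (f : X → ℝ) :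
    Subgroup G where
  carrier := {g | ∀ᵐ x ∂μ, f (g • x) = f x}
  one_mem' := by simp
  mul_mem' {g h} (hg : ∀ᵐ x ∂μ, f (g • x) = f x) (hh : ∀ᵐ x ∂μ, f (h • x) = f x) := by
    change ∀ᵐ x ∂μ, f ((g * h) • x) = f x
    filter_upwards [(hqi h).ae hg, hh] with x hgx hhx
    rw [mul_smul, hgx, hhx]
  inv_mem' {g} (hg : ∀ᵐ x ∂μ, f (g • x) = f x) := by
    change ∀ᵐ x ∂μ, f (g⁻¹ • x) = f x
    filter_upwards [(hqi g⁻¹).ae hg] with x hx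
    rw [smul_inv_smul] at hx
    exact hx.symm

section Haar

variable {G : Type*} [Group G] [TopologicalSpace G] [IsTopologicalGroup G]
  [LocallyCompactSpace G] [MeasurableSpace G] [BorelSpace G]
  {mG θ : Measure G} [mG.IsHaarMeasure] [mG.InnerRegular]

theorem Subgroup.isOpen_of_measure_compl_eq_zero [NeZero θ] (hθ : θ ≪ mG) (H : Subgroup G)
    (hH : θ (H : Set G)ᶜ = 0) : IsOpen (H : Set G) := by
  set E := (toMeasurable θ (H : Set G)ᶜ)ᶜ
  have hEH : E ⊆ H := Set.compl_subset_comm.1 (subset_toMeasurable _ _)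
  have hθE : θ E ≠ 0 := by
    intro h
    have hEc : θ Eᶜ = 0 := by rw [compl_compl, measure_toMeasurable, hH]
    have huniv := measure_univ_le_add_compl (μ := θ) E
    rw [h, hEc, add_zero, nonpos_iff_eq_zero, Measure.measure_univ_eq_zero] at huniv
    exact NeZero.ne θ huniv
  refine H.isOpen_of_mem_nhds (Filter.mem_of_superset
    (Measure.div_mem_nhds_one_of_haar_pos mG E (measurableSet_toMeasurable _ _).compl
      (pos_iff_ne_zero.2 fun h => hθE (hθ h))) ?_)
  rintro _ ⟨a, ha, b, hb, rfl⟩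
  exact H.div_mem (hEH ha) (hEH hb)

theorem IsAdmissible.eq_top_of_measure_compl_eq_zero [NeZero θ] (hadm : IsAdmissible mG θ)
    (H : Subgroup G) (hH : θ (H : Set G)ᶜ = 0) : H = ⊤ :=
  SetLike.coe_injective <| hadm.2 H (H.isClosed_of_isOpen
    (H.isOpen_of_measure_compl_eq_zero hadm.1 hH)) (fun _ ha _ hb => H.mul_mem ha hb) hH

end Haar

theorem stmt_9_general {G X : Type*} [Group G] [TopologicalSpace G] [IsTopologicalGroup G]
    [LocallyCompactSpace G] [SecondCountableTopology G]
    [MeasurableSpace G] [BorelSpace G] [MeasurableSpace X]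
    (mG : Measure G) [mG.IsHaarMeasure]
    (θ : Measure G) [IsProbabilityMeasure θ] (hadm : IsAdmissible mG θ)
    [MulAction G X] (hact : Measurable fun p : G × X => p.1 • p.2)
    (μ : Measure X) [IsProbabilityMeasure μ]
    (hstat : ∀ s : Set X, MeasurableSet s → ∫⁻ g, μ.map (g • · : X → X) s ∂θ = μ s)
    (hqi : ∀ g : G, μ.map (g • · : X → X) ≪ μ ∧ μ ≪ μ.map (g • · : X → X))
    (f : X → ℝ) (hf_meas : Measurable f) (C : ℝ) (hf_bdd : ∀ x, |f x| ≤ C) :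
    (∀ᵐ x ∂μ, ∫ g, f (g • x) ∂θ = f x) ↔ ∀ g : G, ∀ᵐ x ∂μ, f (g • x) = f x := by
  refine ⟨fun hT => ?_, markovOperator_ae_eq_of_forall_ae_smul_eq hact hf_meas⟩
  let H := aeStabilizer μ (fun g => ⟨hact.comp measurable_prodMk_left, (hqi g).1⟩) f
  have hH : θ (H : Set G)ᶜ = 0 :=
    ae_ae_smul_eq_of_markovOperator_eq hact hstat hf_meas hf_bdd hT
  exact (Subgroup.eq_top_iff' H).1 (hadm.eq_top_of_measure_compl_eq_zero H hH)

/-- For `f ∈ L^∞(μ)` of a stationary `(G,θ)`-space, `T_θ f = f` (μ-a.e.) holds if and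
only if `f` is `G`-invariant. -/
theorem stmt_9 {G X : Type*} [Group G] [TopologicalSpace G] [IsTopologicalGroup G]
    [LocallyCompactSpace G] [SecondCountableTopology G]
    [MeasurableSpace G] [BorelSpace G] [MeasurableSpace X] [StandardBorelSpace X]
    (mG : Measure G) [mG.IsHaarMeasure]
    (θ : Measure G) [IsProbabilityMeasure θ] (hadm : IsAdmissible mG θ)
    [MulAction G X] (hact : Measurable fun p : G × X => p.1 • p.2)
    (μ : Measure X) [IsProbabilityMeasure μ]
    (hstat : ∀ s : Set X, MeasurableSet s → ∫⁻ g, μ.map (g • · : X → X) s ∂θ = μ s)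
    (hqi : ∀ g : G, μ.map (g • · : X → X) ≪ μ ∧ μ ≪ μ.map (g • · : X → X))
    (f : X → ℝ) (hf_meas : Measurable f) (C : ℝ) (hf_bdd : ∀ x, |f x| ≤ C) :
    (∀ᵐ x ∂μ, ∫ g, f (g • x) ∂θ = f x) ↔ ∀ g : G, ∀ᵐ x ∂μ, f (g • x) = f x :=
  stmt_9_general mG θ hadm hact μ hstat hqi f hf_meas C hf_bdd
end

section
/- Let A_1, A_2, … and B_1, B_2, … be independent i.i.d. sequences of real random variables with A_n > 0, satisfying −∞ < 𝔼[log A_1] < 0 and 𝔼[log⁺|B_1|] < ∞. Set Q_0 = 1 and Q_n = A_1⋯A_n. Then the series R_∞ = Σ_{n=1}^∞ Q_{n−1} B_n converges absolutely almost surely. -/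
/-!
By the strong law of large numbers, almost surely `log Q_n = Σ_{i<n} log A_i ≤ -α n` eventually,
for any `0 < α < -𝔼[log A]`. For `β > 0`, `Σ_n ℙ(log⁺|B_n| > β n) = Σ_n ℙ(log⁺|B| / β > n)` is
finite because `log⁺|B|` is integrable, so by Borel–Cantelli almost surely `log⁺|B_n| ≤ β n`
eventually. Taking `β < α`, the terms `|Q_n B_n|` are eventually dominated by `exp ((β - α) n)`.
-/

open MeasureTheory ProbabilityTheory Filter Finset Real Function

lemma Real.abs_le_exp_posLog (x : ℝ) : |x| ≤ exp (log⁺ x) := by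
  rw [← posLog_abs, posLog_eq_log_max_one (abs_nonneg x), exp_log (by positivity)]
  exact le_max_right 1 |x|

lemma summable_abs_prod_mul_of_eventually_log_le {a b : ℕ → ℝ} (ha : ∀ n, 0 < a n)
    {α β : ℝ} (hβα : β < α)
    (hsum : ∀ᶠ n : ℕ in atTop, ∑ i ∈ range n, log (a i) ≤ -α * n)
    (hb : ∀ᶠ n : ℕ in atTop, log⁺ (b n) ≤ β * n) :
    Summable fun n => |(∏ i ∈ range n, a i) * b n| := by
  have hgeom : Summable fun n : ℕ => exp (β - α) ^ n :=
    summable_geometric_of_lt_one (exp_pos _).le (exp_lt_one_iff.2 (by linarith))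
  refine hgeom.of_norm_bounded_eventually ?_
  rw [Nat.cofinite_eq_atTop]
  filter_upwards [hsum, hb] with n hsum_n hb_n
  have hprod : ∏ i ∈ range n, a i = exp (∑ i ∈ range n, log (a i)) := by
    rw [exp_sum]
    exact prod_congr rfl fun i _ => (exp_log (ha i)).symm
  calc ‖|(∏ i ∈ range n, a i) * b n|‖
      = exp (∑ i ∈ range n, log (a i)) * |b n| := by
        rw [norm_abs_eq_norm, norm_mul, hprod, norm_of_nonneg (exp_pos _).le, norm_eq_abs]
    _ ≤ exp (-α * n) * exp (β * n) := by
        gcongr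
        exact (abs_le_exp_posLog _).trans (exp_le_exp.2 hb_n)
    _ = exp (β - α) ^ n := by
        rw [← exp_add, ← exp_nat_mul]
        ring_nf

namespace ProbabilityTheory

variable {Ω : Type*} {mΩ : MeasurableSpace Ω} {μ : Measure Ω}

lemma ae_eventually_sum_le_mul_of_integral_lt {X : ℕ → Ω → ℝ} (hint : Integrable (X 0) μ)
    (hindep : Pairwise ((· ⟂ᵢ[μ] ·) on X)) (hident : ∀ i, IdentDistrib (X i) (X 0) μ μ)
    {c : ℝ} (hc : μ[X 0] < c) :
    ∀ᵐ ω ∂μ, ∀ᶠ n : ℕ in atTop, ∑ i ∈ range n, X i ω ≤ c * n := by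
  filter_upwards [strong_law_ae_real X hint hindep hident] with ω hω
  filter_upwards [hω.eventually_lt_const hc, eventually_gt_atTop 0] with n hn hpos
  exact ((div_lt_iff₀ (Nat.cast_pos.2 hpos)).1 hn).le

lemma ae_eventually_le_mul_of_identDistrib [IsProbabilityMeasure μ] {Y : ℕ → Ω → ℝ}
    (hint : Integrable (Y 0) μ) (hnonneg : 0 ≤ Y 0)
    (hident : ∀ n, IdentDistrib (Y n) (Y 0) μ μ)
    {c : ℝ} (hc : 0 < c) :
    ∀ᵐ ω ∂μ, ∀ᶠ n : ℕ in atTop, Y n ω ≤ c * n := by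
  let _ : MeasureSpace Ω := ⟨μ⟩
  have htail : ∑' n : ℕ, μ {ω | c⁻¹ * Y 0 ω ∈ Set.Ioi (n : ℝ)} < ⊤ :=
    tsum_prob_mem_Ioi_lt_top (hint.const_mul c⁻¹) fun ω =>
      mul_nonneg (inv_nonneg.2 hc.le) (hnonneg ω)
  have hprob (n : ℕ) :
      μ (Y n ⁻¹' Set.Ioi (c * n)) = μ {ω | c⁻¹ * Y 0 ω ∈ Set.Ioi (n : ℝ)} := by
    rw [(hident n).measure_mem_eq measurableSet_Ioi]
    congr 1
    ext ω
    simp only [Set.mem_preimage, Set.mem_Ioi, Set.mem_ofPred_eq, lt_inv_mul_iff₀ hc]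
  filter_upwards [ae_eventually_notMem (μ := μ) (s := fun n : ℕ => Y n ⁻¹' Set.Ioi (c * n))
    (by rw [tsum_congr hprob]; exact htail.ne)] with ω hω
  filter_upwards [hω] with n hn
  exact not_lt.1 hn

end ProbabilityTheory

/-- For independent i.i.d. sequences `(A_n)`, `(B_n)` with `A_n > 0`,
`−∞ < 𝔼[log A] < 0` and `𝔼[log⁺|B|] < ∞`, the series `Σ Q_n B_{n+1}` with
`Q_n = A_1⋯A_n` converges absolutely almost surely. -/
theorem stmt_12 {Ω : Type*} [MeasurableSpace Ω] (P : Measure Ω) [IsProbabilityMeasure P]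
    (A B : ℕ → Ω → ℝ)
    (hA_meas : ∀ n, Measurable (A n)) (hB_meas : ∀ n, Measurable (B n))
    (hA_pos : ∀ n ω, 0 < A n ω)
    (hA_id : ∀ n, P.map (A n) = P.map (A 0))
    (hB_id : ∀ n, P.map (B n) = P.map (B 0))
    (hindep : ProbabilityTheory.iIndepFun
      (Sum.elim A B) P)
    (hlogA_int : Integrable (fun ω => Real.log (A 0 ω)) P)
    (hlogA_neg : ∫ ω, Real.log (A 0 ω) ∂P < 0)
    (hlogB_int : Integrable (fun ω => max 0 (Real.log |B 0 ω|)) P) :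
    ∀ᵐ ω ∂P, Summable fun n : ℕ => |(∏ i ∈ Finset.range n, A i ω) * B n ω| := by
  set m := ∫ ω, log (A 0 ω) ∂P
  have hlogA_indep : Pairwise ((· ⟂ᵢ[P] ·) on fun n ω => log (A n ω)) := fun i j hij =>
    (hindep.indepFun (i := .inl i) (j := .inl j) (by simpa using hij)).comp
      measurable_log measurable_log
  have hlogA_ident (n : ℕ) : IdentDistrib (fun ω => log (A n ω)) (fun ω => log (A 0 ω)) P P :=
    (show IdentDistrib (A n) (A 0) P P from
      ⟨(hA_meas n).aemeasurable, (hA_meas 0).aemeasurable, hA_id n⟩).comp measurable_log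
  have hposLogB_ident (n : ℕ) :
      IdentDistrib (fun ω => log⁺ (B n ω)) (fun ω => log⁺ (B 0 ω)) P P :=
    (show IdentDistrib (B n) (B 0) P P from
      ⟨(hB_meas n).aemeasurable, (hB_meas 0).aemeasurable, hB_id n⟩).comp
      continuous_posLog.measurable
  have hlogA_sum := ae_eventually_sum_le_mul_of_integral_lt hlogA_int hlogA_indep hlogA_ident
    (c := m / 2) (by linarith)
  have hposLogB : ∀ᵐ ω ∂P, ∀ᶠ n : ℕ in atTop, log⁺ (B n ω) ≤ -m / 4 * n :=
    ae_eventually_le_mul_of_identDistrib (Y := fun n ω => log⁺ (B n ω))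
      (hlogB_int.congr (.of_forall fun ω => posLog_abs (B 0 ω))) (fun _ => posLog_nonneg)
      hposLogB_ident (by linarith)
  filter_upwards [hlogA_sum, hposLogB] with ω hA hB
  exact summable_abs_prod_mul_of_eventually_log_le (hA_pos · ω) (α := -m / 2) (by linarith)
    (by simpa only [neg_div, neg_neg] using hA) hB
end
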